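/- arXiv:2010.06417 — 2 statements merged into one kernel-verified Lean document; each statement's English description precedes it below -/
import Mathlib

section
/- Let E_h, E_x, E_y, H be finite-dimensional real inner product spaces, f : E_h × E_x × H → E_h a C¹ transition map, g : E_h → E_y a C¹ prediction map, x₁, …, x_L ∈ E_x inputs, targets y₁, …, y_L ∈ E_y, and θ ∈ H. Write fₖ(h) = f(h, xₖ, θ), μ_{j,i} = f_j ∘ ⋯ ∘ fᵢ (identity for j < i), and fix an initial hidden state with hⱼ the layer-j hidden state, ŷⱼ = g(hⱼ), eⱼ = ŷⱼ − yⱼ. Then for any i ∈ {1, …, L}, the gradient at hᵢ of the function v ↦ Σ_{j=i}^{L} ½‖g(μ_{j,i+1}(v)) − yⱼ‖² equals Σ_{j=i}^{L} D*μ_{j,i+1}(hᵢ) · D*g(hⱼ) · eⱼ. -/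
open InnerProductSpace

/-- `muChain f i j = μ_{j,i} = f_j ∘ ⋯ ∘ f_i` for `i ≤ j`, and the identity for `j < i`
(indices are 1-based: `muChain f i 0 = id`). -/
def muChain {E : Type*} (f : ℕ → E → E) (i : ℕ) : ℕ → E → E
  | 0 => id
  | j + 1 => if j + 1 < i then id else f (j + 1) ∘ muChain f i j

lemma muChain_of_lt {E : Type*} (f : ℕ → E → E) {i j : ℕ} (h : j < i) :
    muChain f i j = id := by
  cases j with
  | zero => rfl
  | succ m => simp [muChain, h]

lemma muChain_contDiff {E : Type*} [NormedAddCommGroup E] [NormedSpace ℝ E]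
    (f : ℕ → E → E) (hf : ∀ k, ContDiff ℝ 1 (f k)) (i : ℕ) :
    ∀ j, ContDiff ℝ 1 (muChain f i j) := by
  intro j
  induction j with
  | zero => exact contDiff_id
  | succ m ih =>
    by_cases h : m + 1 < i
    · simp only [muChain, if_pos h]; exact contDiff_id
    · simp only [muChain, if_neg h]; exact (hf (m + 1)).comp ih

lemma muChain_hseq {E : Type*} (f : ℕ → E → E) (hseq : ℕ → E)
    (hrec : ∀ j, hseq (j + 1) = f (j + 1) (hseq j)) (i : ℕ) :
    ∀ j, i ≤ j → muChain f (i + 1) j (hseq i) = hseq j := by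
  intro j hj
  induction j with
  | zero =>
    have : i = 0 := Nat.le_zero.mp hj
    simp [muChain, this]
  | succ m ih =>
    rcases Nat.lt_or_ge (m + 1) (i + 1) with h | h
    · have : i = m + 1 := le_antisymm hj (Nat.lt_succ_iff.mp h)
      rw [muChain_of_lt _ (by omega)]; simp [this]
    · have him : i ≤ m := Nat.lt_succ_iff.mp h
      simp only [muChain, if_neg (by omega : ¬ m + 1 < i + 1), Function.comp_apply,
        ih him, ← hrec m]

lemma hasGradientAt_half_normSq {F : Type*} [NormedAddCommGroup F] [InnerProductSpace ℝ F]
    [CompleteSpace F]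
    (y u₀ : F) :
    HasGradientAt (fun u => (1 / 2 : ℝ) * ‖u - y‖ ^ 2) (u₀ - y) u₀ := by
  rw [hasGradientAt_iff_hasFDerivAt]
  have h1 : HasFDerivAt (fun u : F => u - y) (ContinuousLinearMap.id ℝ F) u₀ :=
    (hasFDerivAt_id u₀).sub_const y
  have h2 := (h1.inner ℝ h1).const_mul (1 / 2 : ℝ)
  have heq : (fun u : F => (1 / 2 : ℝ) * ‖u - y‖ ^ 2)
      = fun u : F => (1 / 2 : ℝ) * (inner ℝ (u - y) (u - y) : ℝ) := by
    funext u; rw [real_inner_self_eq_norm_sq]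
  rw [heq]
  convert h2 using 1
  · rfl
  ext t
  simp only [InnerProductSpace.toDual_apply_apply, ContinuousLinearMap.smul_apply,
    ContinuousLinearMap.coe_comp', Function.comp_apply, ContinuousLinearMap.prod_apply,
    ContinuousLinearMap.coe_id', id_eq, fderivInnerCLM_apply, smul_eq_mul]
  rw [real_inner_comm t (u₀ - y)]
  ring

lemma hasGradientAt_comp_adjoint {E F : Type*}
    [NormedAddCommGroup E] [InnerProductSpace ℝ E] [FiniteDimensional ℝ E]
    [NormedAddCommGroup F] [InnerProductSpace ℝ F] [FiniteDimensional ℝ F]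
    {G : F → ℝ} {w : F} {φ : E → F} {b : E}
    (hG : HasGradientAt G w (φ b)) (hφ : DifferentiableAt ℝ φ b) :
    HasGradientAt (fun v => G (φ v)) (ContinuousLinearMap.adjoint (fderiv ℝ φ b) w) b := by
  rw [hasGradientAt_iff_hasFDerivAt] at hG ⊢
  have h := hG.comp b hφ.hasFDerivAt
  convert h using 1
  · rfl
  · rfl
  · rfl
  ext t
  simp only [InnerProductSpace.toDual_apply_apply, ContinuousLinearMap.coe_comp',
    Function.comp_apply]
  exact ContinuousLinearMap.adjoint_inner_left _ _ _

/-- gradient of the tail loss with respect to the hidden state.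
With transition `fₖ(h) = f(h, xₖ, θ)`, prediction `g`, hidden states `hⱼ` evolving by
`h_{j+1} = f(hⱼ, x_{j+1}, θ)`, `ŷⱼ = g(hⱼ)`, `eⱼ = ŷⱼ − yⱼ`, and
`μ_{j,i} = f_j ∘ ⋯ ∘ f_i`, for any `1 ≤ i ≤ L` the gradient at `hᵢ` of
`v ↦ Σ_{j=i}^{L} ½‖g(μ_{j,i+1}(v)) − yⱼ‖²` equals
`Σ_{j=i}^{L} D*μ_{j,i+1}(hᵢ) · D*g(hⱼ) · eⱼ`. -/
theorem stmt_13
    {Eh Ex Ey H : Type*}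
    [NormedAddCommGroup Eh] [InnerProductSpace ℝ Eh] [FiniteDimensional ℝ Eh]
    [NormedAddCommGroup Ex] [InnerProductSpace ℝ Ex] [FiniteDimensional ℝ Ex]
    [NormedAddCommGroup Ey] [InnerProductSpace ℝ Ey] [FiniteDimensional ℝ Ey]
    [NormedAddCommGroup H] [InnerProductSpace ℝ H] [FiniteDimensional ℝ H]
    (f : Eh × Ex × H → Eh) (g : Eh → Ey)
    (hf : ContDiff ℝ 1 f) (hg : ContDiff ℝ 1 g)
    (L : ℕ) (x : ℕ → Ex) (y : ℕ → Ey) (θ : H)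
    (hseq : ℕ → Eh) (hrec : ∀ j, hseq (j + 1) = f (hseq j, x (j + 1), θ))
    (i : ℕ) (hi1 : 1 ≤ i) (hiL : i ≤ L) :
    gradient
        (fun v => ∑ j ∈ Finset.Icc i L,
          (1 / 2 : ℝ) * ‖g (muChain (fun k h' => f (h', x k, θ)) (i + 1) j v) - y j‖ ^ 2)
        (hseq i) =
      ∑ j ∈ Finset.Icc i L,
        ContinuousLinearMap.adjoint
          (fderiv ℝ (muChain (fun k h' => f (h', x k, θ)) (i + 1) j) (hseq i))
          (ContinuousLinearMap.adjoint (fderiv ℝ g (hseq j)) (g (hseq j) - y j)) := by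
  set fk : ℕ → Eh → Eh := fun k h' => f (h', x k, θ) with hfk
  have hfkC : ∀ k, ContDiff ℝ 1 (fk k) := fun k =>
    hf.comp (contDiff_id.prodMk (contDiff_const.prodMk contDiff_const))
  have hμC : ∀ j, ContDiff ℝ 1 (muChain fk (i + 1) j) := muChain_contDiff fk hfkC (i + 1)
  have hμh : ∀ j, i ≤ j → muChain fk (i + 1) j (hseq i) = hseq j :=
    muChain_hseq fk hseq (fun j => hrec j) i
  -- per-term gradients
  have key : ∀ j ∈ Finset.Icc i L,
      HasGradientAt (fun v => (1 / 2 : ℝ) * ‖g (muChain fk (i + 1) j v) - y j‖ ^ 2)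
        (ContinuousLinearMap.adjoint (fderiv ℝ (muChain fk (i + 1) j) (hseq i))
          (ContinuousLinearMap.adjoint (fderiv ℝ g (hseq j)) (g (hseq j) - y j)))
        (hseq i) := by
    intro j hj
    have hij : i ≤ j := (Finset.mem_Icc.mp hj).1
    have hμj := hμh j hij
    have hGg : HasGradientAt (fun u => (1 / 2 : ℝ) * ‖g u - y j‖ ^ 2)
        (ContinuousLinearMap.adjoint (fderiv ℝ g (hseq j)) (g (hseq j) - y j)) (hseq j) := by
      have := hasGradientAt_comp_adjoint (φ := g) (b := hseq j)
        (hasGradientAt_half_normSq (y j) (g (hseq j)))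
        ((hg.differentiable one_ne_zero).differentiableAt)
      exact this
    have := hasGradientAt_comp_adjoint (φ := muChain fk (i + 1) j) (b := hseq i)
      (hμj.symm ▸ hGg) (((hμC j).differentiable one_ne_zero).differentiableAt)
    rw [hμj] at this
    exact this
  have hsum : HasGradientAt
      (fun v => ∑ j ∈ Finset.Icc i L,
        (1 / 2 : ℝ) * ‖g (muChain fk (i + 1) j v) - y j‖ ^ 2)
      (∑ j ∈ Finset.Icc i L,
        ContinuousLinearMap.adjoint (fderiv ℝ (muChain fk (i + 1) j) (hseq i))
          (ContinuousLinearMap.adjoint (fderiv ℝ g (hseq j)) (g (hseq j) - y j)))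
      (hseq i) := by
    rw [hasGradientAt_iff_hasFDerivAt]
    have h := HasFDerivAt.fun_sum (fun j hj => (hasGradientAt_iff_hasFDerivAt.mp (key j hj)))
    convert h using 1
    · rfl
    · rfl
    exact map_sum (InnerProductSpace.toDual ℝ Eh) _ _
  exact hsum.gradient
end

section
/- Let E_h, E_x, H be finite-dimensional real inner product spaces, f : E_h × E_x × H → E_h a C¹ transition map, x₁, …, x_L ∈ E_x inputs, and θ ∈ H. Write fₖ(h) = f(h, xₖ, θ), define head maps αₖ(h, θ) by α₀(h, θ) = h and αₖ(h, θ) = f(α_{k−1}(h, θ), xₖ, θ), write hⱼ = αⱼ(h, θ), and let μ_{k,i} = f_k ∘ ⋯ ∘ fᵢ (identity for k < i). Then for any k ∈ {1, …, L} and h ∈ E_h, the derivative of αₖ with respect to the shared parameter θ satisfies ∇_θ αₖ(h, θ) = Σ_{j=1}^{k} Dμ_{k,j+1}(hⱼ) ∘ ∇_θ f(h_{j−1}, xⱼ, θ). -/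
/-- The RNN head map: `headMap f x 0 h θ = h` and
`headMap f x (i+1) h θ = f (headMap f x i h θ, x (i + 1), θ)`, i.e. `αᵢ(h, θ)`. -/
def headMap {Eh Ex H : Type*} (f : Eh × Ex × H → Eh) (x : ℕ → Ex) :
    ℕ → Eh → H → Eh
  | 0, h, _ => h
  | i + 1, h, θ => f (headMap f x i h θ, x (i + 1), θ)

/-!
Because `θ` enters every layer, the chain rule (total derivative = sum of the two partial
derivatives) gives the recursion
`∇_θ α_{k+1} = D f_{k+1}(h_k) ∘ ∇_θ α_k + ∇_θ f(h_k, x_{k+1}, θ)`.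
Unrolling it from `∇_θ α_0 = 0`, and using `μ_{k,j+1}(h_j) = h_k` so that
`D f_{k+1}(h_k) ∘ D μ_{k,j+1}(h_j) = D μ_{k+1,j+1}(h_j)`, produces the sum.
-/

section Chain

variable {E : Type*} (g : ℕ → E → E)

theorem muChain_of_lt_s15 {i : ℕ} : ∀ {j : ℕ}, j < i → muChain g i j = id
  | 0, _ => rfl
  | _ + 1, hj => if_pos hj

theorem muChain_succ_of_le {i j : ℕ} (hij : i ≤ j + 1) :
    muChain g i (j + 1) = g (j + 1) ∘ muChain g i j :=
  if_neg (Nat.not_lt.mpr hij)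

end Chain

theorem muChain_headMap {Eh Ex H : Type*} (f : Eh × Ex × H → Eh) (x : ℕ → Ex) (θ : H) (h : Eh)
    {j k : ℕ} (hjk : j ≤ k) :
    muChain (fun m h' => f (h', x m, θ)) (j + 1) k (headMap f x j h θ) = headMap f x k h θ := by
  induction k, hjk using Nat.le_induction with
  | base => rw [muChain_of_lt_s15 _ j.lt_succ_self]; rfl
  | succ k hjk ih => rw [muChain_succ_of_le _ (by omega), Function.comp_apply, ih]; rfl

section Differentiability

variable {𝕜 : Type*} [NontriviallyNormedField 𝕜]
  {E : Type*} [NormedAddCommGroup E] [NormedSpace 𝕜 E]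
  {F : Type*} [NormedAddCommGroup F] [NormedSpace 𝕜 F]
  {G : Type*} [NormedAddCommGroup G] [NormedSpace 𝕜 G]

theorem differentiable_muChain {g : ℕ → E → E} (hg : ∀ m, Differentiable 𝕜 (g m)) (i : ℕ) :
    ∀ j, Differentiable 𝕜 (muChain g i j)
  | 0 => differentiable_id
  | j + 1 => by
    unfold muChain
    split
    · exact differentiable_id
    · exact (hg _).comp (differentiable_muChain hg i j)

theorem fderiv_muChain_succ {g : ℕ → E → E} (hg : ∀ m, Differentiable 𝕜 (g m)) {i j : ℕ}
    (hij : i ≤ j + 1) (y : E) :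
    fderiv 𝕜 (muChain g i (j + 1)) y =
      (fderiv 𝕜 (g (j + 1)) (muChain g i j y)).comp (fderiv 𝕜 (muChain g i j) y) := by
  rw [muChain_succ_of_le g hij]
  exact fderiv_comp y (hg _ _) (differentiable_muChain hg i j y)

theorem hasFDerivAt_comp_prodMk_id {φ : E × G → F} {u : G → E} {θ : G}
    (hφ : DifferentiableAt 𝕜 φ (u θ, θ)) (hu : DifferentiableAt 𝕜 u θ) :
    HasFDerivAt (fun t => φ (u t, t))
      ((fderiv 𝕜 (fun e => φ (e, θ)) (u θ)).comp (fderiv 𝕜 u θ) +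
        fderiv 𝕜 (fun t => φ (u θ, t)) θ) θ := by
  set D := fderiv 𝕜 φ (u θ, θ)
  have hD : HasFDerivAt φ D (u θ, θ) := hφ.hasFDerivAt
  have hleft : fderiv 𝕜 (fun e => φ (e, θ)) (u θ) = D.comp (.inl 𝕜 E G) :=
    (hD.comp (u θ) ((hasFDerivAt_id _).prodMk (hasFDerivAt_const _ _))).fderiv
  have hright : fderiv 𝕜 (fun t => φ (u θ, t)) θ = D.comp (.inr 𝕜 E G) :=
    (hD.comp θ ((hasFDerivAt_const _ _).prodMk (hasFDerivAt_id _))).fderiv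
  refine (hD.comp (f := fun t => (u t, t)) θ
    (hu.hasFDerivAt.prodMk (hasFDerivAt_id θ))).congr_fderiv ?_
  rw [hleft, hright]
  ext v
  simp [← map_add]

end Differentiability

section HeadMap

variable {𝕜 : Type*} [NontriviallyNormedField 𝕜]
  {Eh : Type*} [NormedAddCommGroup Eh] [NormedSpace 𝕜 Eh]
  {Ex : Type*} [NormedAddCommGroup Ex] [NormedSpace 𝕜 Ex]
  {H : Type*} [NormedAddCommGroup H] [NormedSpace 𝕜 H]
  {f : Eh × Ex × H → Eh}

theorem differentiable_headMap (hf : Differentiable 𝕜 f) (x : ℕ → Ex) (h : Eh) :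
    ∀ k, Differentiable 𝕜 (headMap f x k h)
  | 0 => differentiable_const h
  | k + 1 => hf.comp ((differentiable_headMap hf x h k).prodMk
      ((differentiable_const _).prodMk differentiable_id))

theorem fderiv_headMap_succ (hf : Differentiable 𝕜 f) (x : ℕ → Ex) (h : Eh) (k : ℕ)
    (θ : H) :
    fderiv 𝕜 (headMap f x (k + 1) h) θ =
      (fderiv 𝕜 (fun h' => f (h', x (k + 1), θ)) (headMap f x k h θ)).comp
          (fderiv 𝕜 (headMap f x k h) θ) +
        fderiv 𝕜 (fun θ' => f (headMap f x k h θ, x (k + 1), θ')) θ :=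
  (hasFDerivAt_comp_prodMk_id (φ := fun q => f (q.1, x (k + 1), q.2))
    (hf.comp (differentiable_fst.prodMk
      ((differentiable_const _).prodMk differentiable_snd)) _)
    (differentiable_headMap hf x h k θ)).fderiv

end HeadMap

theorem stmt_15_general
    {Eh Ex H : Type*}
    [NormedAddCommGroup Eh] [InnerProductSpace ℝ Eh]
    [NormedAddCommGroup Ex] [InnerProductSpace ℝ Ex]
    [NormedAddCommGroup H] [InnerProductSpace ℝ H]
    (f : Eh × Ex × H → Eh) (hf : ContDiff ℝ 1 f)
    (x : ℕ → Ex) (θ : H) (h : Eh)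
    (k : ℕ) :
    fderiv ℝ (fun θ' => headMap f x k h θ') θ =
      ∑ j ∈ Finset.Icc 1 k,
        (fderiv ℝ (muChain (fun m h' => f (h', x m, θ)) (j + 1) k)
            (headMap f x j h θ)).comp
          (fderiv ℝ (fun θ' => f (headMap f x (j - 1) h θ, x j, θ')) θ) := by
  have hdf : Differentiable ℝ f := hf.differentiable one_ne_zero
  have hg : ∀ m, Differentiable ℝ fun h' => f (h', x m, θ) := fun m =>
    hdf.comp (differentiable_id.prodMk (differentiable_const _))
  induction k with
  | zero => simp [headMap]
  | succ k ih =>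
    rw [fderiv_headMap_succ hdf, ih, ContinuousLinearMap.comp_finsetSum,
      Finset.sum_Icc_succ_top (Nat.le_add_left 1 k), muChain_of_lt_s15 _ (Nat.lt_succ_self _),
      fderiv_id, ContinuousLinearMap.id_comp, Nat.add_sub_cancel]
    congr 1
    refine Finset.sum_congr rfl fun j hj => ?_
    have hjk := (Finset.mem_Icc.mp hj).2
    rw [fderiv_muChain_succ hg (Nat.succ_le_succ hjk), muChain_headMap f x θ h hjk,
      ContinuousLinearMap.comp_assoc]

/-- expansion of the parameter derivative of the head map.
With transition `fₖ(h) = f(h, xₖ, θ)` (parameter `θ` shared across layers), head maps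
`αₖ`, hidden states `hⱼ = αⱼ(h,θ)` and `μ_{k,i} = f_k ∘ ⋯ ∘ f_i`, for `1 ≤ k ≤ L`:
`∇_θ αₖ(h,θ) = Σ_{j=1}^{k} Dμ_{k,j+1}(hⱼ) ∘ ∇_θ f(h_{j−1}, xⱼ, θ)`. -/
theorem stmt_15
    {Eh Ex H : Type*}
    [NormedAddCommGroup Eh] [InnerProductSpace ℝ Eh] [FiniteDimensional ℝ Eh]
    [NormedAddCommGroup Ex] [InnerProductSpace ℝ Ex] [FiniteDimensional ℝ Ex]
    [NormedAddCommGroup H] [InnerProductSpace ℝ H] [FiniteDimensional ℝ H]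
    (f : Eh × Ex × H → Eh) (hf : ContDiff ℝ 1 f)
    (L : ℕ) (x : ℕ → Ex) (θ : H) (h : Eh)
    (k : ℕ) (hk1 : 1 ≤ k) (hkL : k ≤ L) :
    fderiv ℝ (fun θ' => headMap f x k h θ') θ =
      ∑ j ∈ Finset.Icc 1 k,
        (fderiv ℝ (muChain (fun m h' => f (h', x m, θ)) (j + 1) k)
            (headMap f x j h θ)).comp
          (fderiv ℝ (fun θ' => f (headMap f x (j - 1) h θ, x j, θ')) θ) :=
  stmt_15_general f hf x θ h k
end
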